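/- arXiv:2206.00921 — 2 statements merged into one kernel-verified Lean document; each statement's English description precedes it below -/
import Mathlib

section
/- Let D be a probability distribution on a finite set Ω of size 2^m with m ≥ 2 and entropy H(D) ≤ 1. Then Σ_{y∈Ω} D(y)·(log₂ D(y))² ≤ m + log₂(m + log₂ m + 2.5). -/
set_option maxHeartbeats 800000

lemma aux1 (s : ℝ) (_hs : 0 ≤ s) : s * Real.exp (-s) ≤ (Real.exp 1)⁻¹ := by
  have h2 : s ≤ Real.exp (s - 1) := by
    have := Real.add_one_le_exp (s - 1); linarith
  have h3 : Real.exp (s - 1) * Real.exp (-s) = (Real.exp 1)⁻¹ := by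
    rw [← Real.exp_add, ← Real.exp_neg]; ring_nf
  calc s * Real.exp (-s) ≤ Real.exp (s - 1) * Real.exp (-s) :=
        mul_le_mul_of_nonneg_right h2 (Real.exp_nonneg _)
    _ = (Real.exp 1)⁻¹ := h3

lemma aux2 (s : ℝ) (hs : 0 ≤ s) : s ^ 2 * Real.exp (-s) ≤ 4 * ((Real.exp 1)⁻¹) ^ 2 := by
  have h := aux1 (s / 2) (by linarith)
  have hexp : Real.exp (-(s / 2)) * Real.exp (-(s / 2)) = Real.exp (-s) := by
    rw [← Real.exp_add]; ring_nf
  have hx : 0 ≤ s / 2 * Real.exp (-(s / 2)) := by positivity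
  nlinarith [mul_self_le_mul_self hx h, Real.exp_pos (-(s/2))]

lemma key (lam : ℝ) (hlam : 0 ≤ lam) (p : ℝ) (h0 : 0 ≤ p) (h1 : p ≤ 1) :
    p * (Real.logb 2 p) ^ 2 ≤
      lam * (p * Real.logb 2 (1 / p)) +
        Real.exp (-(lam * Real.log 2)) *
          (lam * (Real.exp 1 * Real.log 2)⁻¹ + 4 * ((Real.exp 1 * Real.log 2) ^ 2)⁻¹) := by
  have hL : 0 < Real.log 2 := Real.log_pos one_lt_two
  have hE : 0 < Real.exp 1 := Real.exp_pos 1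
  have hB : 0 ≤ Real.exp (-(lam * Real.log 2)) *
      (lam * (Real.exp 1 * Real.log 2)⁻¹ + 4 * ((Real.exp 1 * Real.log 2) ^ 2)⁻¹) := by
    positivity
  rcases eq_or_lt_of_le h0 with hp | hp
  · rw [← hp]; simp only [zero_mul, mul_zero, zero_add]; exact hB
  · set L := Real.log 2 with hLdef
    set E := Real.exp 1 with hEdef
    set t := -Real.log p with htdef
    have ht : 0 ≤ t := by
      have := Real.log_nonpos h0 h1; simp [htdef]; linarith
    have hpe : p = Real.exp (-t) := by
      rw [htdef, neg_neg, Real.exp_log hp]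
    have hlogb : Real.logb 2 p = -t / L := by
      simp [Real.logb, htdef, hLdef]
    have hlogb2 : Real.logb 2 (1 / p) = t / L := by
      rw [one_div, Real.logb_inv, hlogb]; ring
    rw [hlogb, hlogb2, hpe]
    by_cases hc : t ≤ lam * L
    · have hd : t / L ≤ lam := (div_le_iff₀ hL).mpr hc
      have hnn : 0 ≤ Real.exp (-t) * (t / L) := by positivity
      have he : Real.exp (-t) * (-t / L) ^ 2 = Real.exp (-t) * (t / L) * (t / L) := by
        ring
      rw [he]
      have := mul_le_mul_of_nonneg_left hd hnn
      nlinarith [hB]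
    · push_neg at hc
      set s := t - lam * L with hsdef
      have hs : 0 ≤ s := by simp [hsdef]; linarith
      have h1s := aux1 s hs
      have h2s := aux2 s hs
      have hsplit : Real.exp (-t) = Real.exp (-(lam * L)) * Real.exp (-s) := by
        rw [← Real.exp_add]; congr 1; rw [hsdef]; ring
      have ht2 : t = s + lam * L := by rw [hsdef]; ring
      have core : Real.exp (-s) * (s / L + lam) * (s / L) ≤
          lam * (E * L)⁻¹ + 4 * ((E * L) ^ 2)⁻¹ := by
        have e1 : Real.exp (-s) * (s / L + lam) * (s / L)
            = lam * (s * Real.exp (-s)) / L + (s ^ 2 * Real.exp (-s)) / L ^ 2 := by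
          field_simp; ring
        have b1 : lam * (s * Real.exp (-s)) / L ≤ lam * E⁻¹ / L := by
          gcongr
        have b2 : (s ^ 2 * Real.exp (-s)) / L ^ 2 ≤ (4 * (E⁻¹) ^ 2) / L ^ 2 := by
          gcongr
        have e2 : lam * E⁻¹ / L + (4 * (E⁻¹) ^ 2) / L ^ 2
            = lam * (E * L)⁻¹ + 4 * ((E * L) ^ 2)⁻¹ := by
          field_simp
        linarith [e1 ▸ (add_le_add b1 b2), e2 ▸ le_refl (lam * E⁻¹ / L + (4 * (E⁻¹) ^ 2) / L ^ 2)]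
      rw [hsplit, ht2]
      have hdiv : (s + lam * L) / L = s / L + lam := by field_simp
      have hsq : (-(s + lam * L) / L) ^ 2 = (s / L + lam) ^ 2 := by
        rw [neg_div, neg_sq, hdiv]
      rw [hsq, hdiv]
      have hy : (0:ℝ) < Real.exp (-(lam * L)) := Real.exp_pos _
      nlinarith [mul_le_mul_of_nonneg_left core hy.le]

theorem stmt7 {Ω : Type*} [Fintype Ω] (m : ℕ) (hm : 2 ≤ m)
    (hcard : Fintype.card Ω = 2 ^ m) (D : Ω → ℝ)
    (h0 : ∀ y, 0 ≤ D y) (h1 : ∀ y, D y ≤ 1) (hsum : ∑ y, D y = 1)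
    (hH : ∑ y, D y * Real.logb 2 (1 / D y) ≤ 1) :
    ∑ y, D y * (Real.logb 2 (D y))^2
      ≤ (m:ℝ) + Real.logb 2 ((m:ℝ) + Real.logb 2 (m:ℝ) + 2.5) := by
  have hL : 0 < Real.log 2 := Real.log_pos one_lt_two
  have hE : 0 < Real.exp 1 := Real.exp_pos 1
  have hL1 : 0.6931471803 ≤ Real.log 2 := le_of_lt Real.log_two_gt_d9
  have hL2 : Real.log 2 ≤ 0.6931471808 := le_of_lt Real.log_two_lt_d9
  have hE1 : 2.7182818283 ≤ Real.exp 1 := le_of_lt Real.exp_one_gt_d9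
  have hE2 : Real.exp 1 ≤ 2.7182818286 := le_of_lt Real.exp_one_lt_d9
  have hm2 : (2:ℝ) ≤ (m:ℝ) := by exact_mod_cast hm
  have hmpos : (0:ℝ) < (m:ℝ) := by linarith
  have hlogm : 0 ≤ Real.logb 2 (m:ℝ) := Real.logb_nonneg one_lt_two (by linarith)
  set C : ℝ := (m:ℝ) + Real.logb 2 (m:ℝ) + 2.5 with hCdef
  have hC1 : (1:ℝ) ≤ C := by rw [hCdef]; norm_num; linarith
  have hC0 : (0:ℝ) < C := by linarith
  have hlogbC : 0 ≤ Real.logb 2 C := Real.logb_nonneg one_lt_two hC1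
  have hLinv : (Real.log 2)⁻¹ ≤ 1.4427 := by
    rw [inv_le_comm₀ hL (by norm_num)]; linarith
  have hLinv0 : 0 < (Real.log 2)⁻¹ := by positivity
  set lam : ℝ := (m:ℝ) + Real.logb 2 C - (Real.log 2)⁻¹ with hlamdef
  have hlam : 0 ≤ lam := by rw [hlamdef]; linarith
  -- the per-point bound constant
  set B : ℝ := Real.exp (-(lam * Real.log 2)) *
      (lam * (Real.exp 1 * Real.log 2)⁻¹ + 4 * ((Real.exp 1 * Real.log 2) ^ 2)⁻¹) with hBdef
  -- step 1: sum bound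
  have step1 : ∑ y, D y * (Real.logb 2 (D y))^2 ≤ lam + (2:ℝ)^m * B := by
    calc ∑ y, D y * (Real.logb 2 (D y))^2
        ≤ ∑ y, (lam * (D y * Real.logb 2 (1 / D y)) + B) :=
          Finset.sum_le_sum (fun y _ => key lam hlam (D y) (h0 y) (h1 y))
      _ = lam * (∑ y, D y * Real.logb 2 (1 / D y)) + (Fintype.card Ω : ℝ) * B := by
          rw [Finset.sum_add_distrib, ← Finset.mul_sum, Finset.sum_const, Finset.card_univ,
            nsmul_eq_mul]
      _ ≤ lam * 1 + (2:ℝ)^m * B := by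
          have h1' : lam * (∑ y, D y * Real.logb 2 (1 / D y)) ≤ lam * 1 :=
            mul_le_mul_of_nonneg_left hH hlam
          have h2' : (Fintype.card Ω : ℝ) = (2:ℝ)^m := by rw [hcard]; push_cast; ring
          rw [h2']; linarith
      _ = lam + (2:ℝ)^m * B := by ring
  -- step 2: compute 2^m * exp(-(lam * log 2)) = e / C
  have hpow : (2:ℝ)^m * Real.exp (-(lam * Real.log 2)) = Real.exp 1 / C := by
    have e1 : (2:ℝ)^m = Real.exp ((m:ℝ) * Real.log 2) := by
      rw [Real.exp_nat_mul, Real.exp_log two_pos]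
    rw [e1, ← Real.exp_add]
    have e2 : (m:ℝ) * Real.log 2 + -(lam * Real.log 2) = 1 - Real.log C := by
      rw [hlamdef]
      have : Real.logb 2 C = Real.log C / Real.log 2 := rfl
      rw [this]
      field_simp
      ring
    rw [e2, Real.exp_sub, Real.exp_log hC0]
  -- step 3: the key numeric inequality  lam + 4 / (e * log 2) ≤ C
  have hfin : lam + 4 / (Real.exp 1 * Real.log 2) ≤ C := by
    obtain ⟨r, hrdef⟩ : ∃ r : ℝ, r = 2.5 * Real.log 2 + 1 - 4 / Real.exp 1 := ⟨_, rfl⟩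
    have hr : 1.2613 ≤ r := by
      rw [hrdef]
      have h4E : 4 / Real.exp 1 ≤ 1.4715178 := by
        rw [div_le_iff₀ hE]; nlinarith
      linarith
    have hexp_r : Real.exp 1 * r ≤ Real.exp r := by
      have h1e : r ≤ Real.exp (r - 1) := by
        have := Real.add_one_le_exp (r - 1); linarith
      have h2e : Real.exp r = Real.exp 1 * Real.exp (r - 1) := by
        rw [← Real.exp_add]; ring_nf
      nlinarith
    have hCm : C ≤ (m:ℝ) * Real.exp r := by
      have hlogm2 : Real.log (m:ℝ) ≤ (m:ℝ) - 1 := Real.log_le_sub_one_of_pos hmpos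
      have hlogbm : Real.logb 2 (m:ℝ) = Real.log (m:ℝ) / Real.log 2 := rfl
      have hlogbm2 : Real.logb 2 (m:ℝ) ≤ ((m:ℝ) - 1) * 1.4427 := by
        rw [hlogbm, div_le_iff₀ hL]; nlinarith
      have her : 3.428 ≤ Real.exp r := by
        have hp1 : (2.7182818283 : ℝ) * 1.2613 ≤ Real.exp 1 * r :=
          mul_le_mul hE1 hr (by norm_num) hE.le
        linarith
      rw [hCdef]; nlinarith
    have hlogC : Real.log C ≤ Real.log (m:ℝ) + r := by
      calc Real.log C ≤ Real.log ((m:ℝ) * Real.exp r) :=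
            Real.log_le_log hC0 hCm
        _ = Real.log (m:ℝ) + r := by
            rw [Real.log_mul (by positivity) (Real.exp_ne_zero r), Real.log_exp]
    -- convert to the logb form
    have key2 : Real.logb 2 C + 4 / (Real.exp 1 * Real.log 2) ≤
        Real.logb 2 (m:ℝ) + 2.5 + (Real.log 2)⁻¹ := by
      have e3 : Real.logb 2 C + 4 / (Real.exp 1 * Real.log 2)
          = (Real.log C + 4 / Real.exp 1) / Real.log 2 := by
        rw [show Real.logb 2 C = Real.log C / Real.log 2 from rfl]
        field_simp [hL.ne', hE.ne']
        try ring
      have e4 : Real.logb 2 (m:ℝ) + 2.5 + (Real.log 2)⁻¹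
          = (Real.log (m:ℝ) + 2.5 * Real.log 2 + 1) / Real.log 2 := by
        rw [show Real.logb 2 (m:ℝ) = Real.log (m:ℝ) / Real.log 2 from rfl]
        field_simp [hL.ne']
        try ring
      rw [e3, e4]
      refine div_le_div_of_nonneg_right ?_ hL.le
      rw [hrdef] at hlogC; linarith
    linarith [key2, hlamdef, hCdef]
  -- step 4: conclude
  have step2 : lam + (2:ℝ)^m * B ≤ (m:ℝ) + Real.logb 2 C := by
    have hmB : (2:ℝ)^m * B = (lam + 4 / (Real.exp 1 * Real.log 2)) / (C * Real.log 2) := by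
      rw [hBdef, ← mul_assoc, hpow]
      field_simp [hC0.ne', hL.ne', hE.ne']
      try ring
    rw [hmB]
    have h5 : (lam + 4 / (Real.exp 1 * Real.log 2)) / (C * Real.log 2) ≤ C / (C * Real.log 2) := by
      apply div_le_div_of_nonneg_right hfin (by positivity : (0:ℝ) ≤ C * Real.log 2)
    have h6 : C / (C * Real.log 2) = (Real.log 2)⁻¹ := by
      rw [← div_div, div_self hC0.ne', one_div]
    have h7 : (m:ℝ) + Real.logb 2 C = lam + (Real.log 2)⁻¹ := by rw [hlamdef]; ring
    rw [h7]
    linarith [h6 ▸ h5]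
  exact le_trans step1 step2
end

section
/- Let D be a probability distribution on a finite set Ω of size 2^m (m ≥ 2) with entropy H(D) ≥ 1. Then the ratio (Σ_y D(y)(log₂ D(y))²) / H(D)² is at most m + log₂(m + log₂ m + 1.1). -/
private lemma cube_le_rpow (x : ℝ) : (1 + x * Real.log 2 / 3) ^ 3 ≤ (2:ℝ) ^ x := by
  have h2x : (2:ℝ) ^ x = Real.exp (Real.log 2 * x) := by
    rw [Real.rpow_def_of_pos (by norm_num)]
  rcases le_or_gt (1 + x * Real.log 2 / 3) 0 with h | h
  · have h1 : (1 + x * Real.log 2 / 3) ^ 3 ≤ 0 := Odd.pow_nonpos (by decide) h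
    exact h1.trans (Real.rpow_pos_of_pos (by norm_num) x).le
  · have h1 : 1 + x * Real.log 2 / 3 ≤ Real.exp (x * Real.log 2 / 3) := by
      have := Real.add_one_le_exp (x * Real.log 2 / 3); linarith
    have h3 : (1 + x * Real.log 2 / 3) ^ 3 ≤ (Real.exp (x * Real.log 2 / 3)) ^ 3 :=
      pow_le_pow_left₀ h.le h1 3
    have h4 : (Real.exp (x * Real.log 2 / 3)) ^ 3 = Real.exp (Real.log 2 * x) := by
      rw [← Real.exp_nat_mul]
      congr 1
      ring
    rw [h2x, ← h4]
    exact h3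

private lemma key_scalar (a r x : ℝ) (ha : 4 ≤ a)
    (hs1 : 0 < a * Real.log 2 - 1)
    (hr : r * (a * Real.log 2 - 1) = a)
    (hs : (3:ℝ)/2 ≤ a * Real.log 2)
    (hx : -r ≤ x) :
    (a + x) * (x + r) ≤ r * a * (2:ℝ) ^ x := by
  set l := Real.log 2 with hl
  have hrpos : 0 < r := by nlinarith
  have hra : (0:ℝ) < r * a := by nlinarith
  have hcube := cube_le_rpow x
  have step1 : r * a * (1 + x * l / 3) ^ 3 ≤ r * a * (2:ℝ) ^ x :=
    mul_le_mul_of_nonneg_left hcube hra.le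
  refine le_trans ?_ step1
  have htan : r * a * l = a + r := by nlinarith
  have hrdef : r = a / (a * l - 1) := by
    rw [eq_div_iff hs1.ne']; exact hr
  have hE : r * a * l ^ 2 / 3 - 1 - r ^ 2 * a * l ^ 3 / 27
      = (2 * a * l - 3) ^ 3 / (27 * (a * l - 1) ^ 2) := by
    rw [hrdef]
    field_simp
    ring
  have hEnn : 0 ≤ r * a * l ^ 2 / 3 - 1 - r ^ 2 * a * l ^ 3 / 27 := by
    rw [hE]
    have h1 : (0:ℝ) ≤ (2 * a * l - 3) ^ 3 := pow_nonneg (by linarith) 3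
    positivity
  have expand : r * a * (1 + x * l / 3) ^ 3 - (a + x) * (x + r)
      = x ^ 2 * (r * a * l ^ 2 / 3 - 1 - r ^ 2 * a * l ^ 3 / 27)
        + (x ^ 2 * (x + r)) * (r * a * l ^ 3 / 27) := by
    linear_combination x * htan
  nlinarith [mul_nonneg (mul_nonneg (sq_nonneg x) (by linarith : (0:ℝ) ≤ x + r))
      (by positivity : (0:ℝ) ≤ r * a * l ^ 3 / 27),
    mul_nonneg (sq_nonneg x) hEnn]

set_option maxHeartbeats 1000000 in
theorem stmt8 {Ω : Type*} [Fintype Ω] (m : ℕ) (hm : 2 ≤ m)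
    (hcard : Fintype.card Ω = 2 ^ m) (D : Ω → ℝ)
    (h0 : ∀ y, 0 ≤ D y) (h1 : ∀ y, D y ≤ 1) (hsum : ∑ y, D y = 1)
    (hH : 1 ≤ ∑ y, D y * Real.logb 2 (1 / D y)) :
    (∑ y, D y * (Real.logb 2 (D y))^2) / (∑ y, D y * Real.logb 2 (1 / D y))^2
      ≤ (m:ℝ) + Real.logb 2 ((m:ℝ) + Real.logb 2 (m:ℝ) + 1.1) := by
  have hm2 : (2:ℝ) ≤ (m:ℝ) := by exact_mod_cast hm
  have hmpos : (0:ℝ) < (m:ℝ) := by linarith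
  have hlgt := Real.log_two_gt_d9
  have hllt := Real.log_two_lt_d9
  have hl : (0:ℝ) < Real.log 2 := by linarith
  have hlb1 : (1:ℝ) ≤ Real.logb 2 (m:ℝ) := by
    have h := Real.logb_le_logb_of_le (one_lt_two) (by norm_num : (0:ℝ) < 2) hm2
    rwa [Real.logb_self_eq_one one_lt_two] at h
  set K := (m:ℝ) + Real.logb 2 (m:ℝ) + 1.1 with hKdef
  clear_value K
  have hK41 : 4.1 ≤ K := by rw [hKdef]; linarith
  have hKpos : (0:ℝ) < K := by linarith
  set a := (m:ℝ) + Real.logb 2 K with hadef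
  clear_value a
  have hlogK2 : (2:ℝ) ≤ Real.logb 2 K := by
    have h4 : Real.logb 2 (4:ℝ) = 2 := by
      rw [show (4:ℝ) = 2 ^ (2:ℕ) by norm_num, Real.logb_pow,
        Real.logb_self_eq_one one_lt_two]
      norm_num
    have h := Real.logb_le_logb_of_le (one_lt_two) (by norm_num : (0:ℝ) < 4)
      (by linarith : (4:ℝ) ≤ K)
    rw [h4] at h
    exact h
  have ha4 : (4:ℝ) ≤ a := by rw [hadef]; linarith
  -- a ≤ K
  have h21 : (2:ℝ) + 0.2 * Real.log 2 ≤ (2:ℝ) ^ (1.1:ℝ) := by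
    have he : (2:ℝ) ^ (1.1:ℝ) = 2 * (2:ℝ) ^ (0.1:ℝ) := by
      rw [show (1.1:ℝ) = 1 + 0.1 by norm_num, Real.rpow_add (by norm_num),
        Real.rpow_one]
    have hexp : 1 + 0.1 * Real.log 2 ≤ (2:ℝ) ^ (0.1:ℝ) := by
      rw [Real.rpow_def_of_pos (by norm_num)]
      have := Real.add_one_le_exp (Real.log 2 * 0.1)
      linarith
    rw [he]; linarith
  have hlogm : Real.logb 2 (m:ℝ) ≤ 1 + ((m:ℝ) - 2) / (2 * Real.log 2) := by
    have hlog : Real.log ((m:ℝ) / 2) ≤ (m:ℝ) / 2 - 1 :=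
      Real.log_le_sub_one_of_pos (by linarith)
    have hsplit : Real.log (m:ℝ) = Real.log 2 + Real.log ((m:ℝ) / 2) := by
      rw [← Real.log_mul (by norm_num) (by positivity)]
      congr 1
      field_simp
    rw [Real.logb, hsplit, add_div, div_self hl.ne']
    have h2 : Real.log ((m:ℝ)/2) / Real.log 2 ≤ ((m:ℝ)/2 - 1) / Real.log 2 := by
      gcongr
    have h3 : ((m:ℝ)/2 - 1) / Real.log 2 = ((m:ℝ) - 2) / (2 * Real.log 2) := by
      rw [div_eq_div_iff hl.ne' (by positivity)]
      ring
    rw [h3] at h2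
    linarith
  have hinv : (1:ℝ) / (2 * Real.log 2) ≤ 0.7215 := by
    rw [div_le_iff₀ (by linarith)]
    nlinarith
  have hK2m : K ≤ (m:ℝ) * (2:ℝ) ^ (1.1:ℝ) := by
    have hnum : K ≤ (m:ℝ) * (2 + 0.2 * Real.log 2) := by
      have hfrac : ((m:ℝ) - 2) / (2 * Real.log 2) ≤ ((m:ℝ) - 2) * 0.7215 := by
        have : ((m:ℝ) - 2) / (2 * Real.log 2) = ((m:ℝ) - 2) * (1 / (2 * Real.log 2)) := by
          ring
        rw [this]
        exact mul_le_mul_of_nonneg_left hinv (by linarith)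
      rw [hKdef]
      nlinarith
    calc K ≤ (m:ℝ) * (2 + 0.2 * Real.log 2) := hnum
      _ ≤ (m:ℝ) * (2:ℝ) ^ (1.1:ℝ) := mul_le_mul_of_nonneg_left h21 (by linarith)
  have haK : a ≤ K := by
    have hmono := Real.logb_le_logb_of_le (one_lt_two) hKpos hK2m
    have heq : Real.logb 2 ((m:ℝ) * (2:ℝ) ^ (1.1:ℝ))
        = Real.logb 2 (m:ℝ) + 1.1 := by
      rw [Real.logb_mul (by linarith) (by positivity),
        Real.logb_rpow (by norm_num) (by norm_num)]
    rw [heq] at hmono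
    linarith
  -- set up r, μ, ν
  set l := Real.log 2 with hldef
  clear_value l
  have hs1 : 0 < a * l - 1 := by nlinarith
  have hs : (3:ℝ)/2 ≤ a * l := by nlinarith
  set r := a / (a * l - 1) with hrdef
  clear_value r
  have hr : r * (a * l - 1) = a := by
    rw [hrdef]; field_simp
  have hrpos : 0 < r := by
    rw [hrdef]; positivity
  set μ := a - r with hmudef
  clear_value μ
  set ν := r * a / K with hnudef
  clear_value ν
  have hνnn : 0 ≤ ν := by rw [hnudef]; positivity
  have hνr : ν ≤ r := by
    rw [hnudef, div_le_iff₀ hKpos]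
    have := mul_le_mul_of_nonneg_left haK hrpos.le
    linarith
  have h2m : (0:ℝ) < (2:ℝ) ^ ((m:ℝ)) := Real.rpow_pos_of_pos (by norm_num) _
  have h2a : (2:ℝ) ^ (a:ℝ) = (2:ℝ) ^ ((m:ℝ)) * K := by
    rw [hadef, Real.rpow_add (by norm_num),
      Real.rpow_logb (by norm_num) (by norm_num) hKpos]
  have hcount : ((Fintype.card Ω : ℕ) : ℝ) = (2:ℝ) ^ ((m:ℝ)) := by
    rw [hcard]
    push_cast
    rw [← Real.rpow_natCast 2 m]
  -- per-atom inequality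
  have hatom : ∀ y, D y * (Real.logb 2 (D y))^2
      ≤ μ * (D y * Real.logb 2 (1 / D y)) + ν / (2:ℝ) ^ ((m:ℝ)) := by
    intro y
    have hcnn : 0 ≤ ν / (2:ℝ) ^ ((m:ℝ)) := by positivity
    rcases eq_or_lt_of_le (h0 y) with h0y | h0y
    · rw [← h0y]
      simp only [zero_mul, mul_zero, zero_add]
      exact hcnn
    · set p := D y with hpdef
      set L := Real.logb 2 (1 / p) with hLdef
      have hp1 : p ≤ 1 := h1 y
      have hinvp : (1:ℝ) ≤ 1 / p := one_le_one_div h0y hp1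
      have hLnn : 0 ≤ L := Real.logb_nonneg one_lt_two hinvp
      have hpLnn : 0 ≤ p * L := mul_nonneg h0y.le hLnn
      have hsq : (Real.logb 2 p)^2 = L^2 := by
        rw [hLdef, one_div, Real.logb_inv]
        ring
      rw [hsq]
      rcases le_or_gt L μ with hLμ | hLμ
      · have h5 : p * L^2 ≤ μ * (p * L) := by nlinarith
        linarith
      · -- tail case
        have hppow : p = (2:ℝ) ^ (-L) := by
          have h6 : (2:ℝ) ^ (L:ℝ) = 1 / p :=
            Real.rpow_logb (by norm_num) (by norm_num) (by positivity)
          rw [Real.rpow_neg (by norm_num), h6]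
          simp
        have hx : -r ≤ L - a := by
          rw [hmudef] at hLμ
          linarith
        have hs1' : 0 < a * Real.log 2 - 1 := by rw [← hldef]; exact hs1
        have hs' : (3:ℝ)/2 ≤ a * Real.log 2 := by rw [← hldef]; exact hs
        have hr' : r * (a * Real.log 2 - 1) = a := by rw [← hldef]; exact hr
        have hks := key_scalar a r (L - a) ha4 hs1' hr' hs' hx
        have hks' : L * (L - μ) ≤ r * a * (2:ℝ) ^ (L - a) := by
          have he1 : a + (L - a) = L := by ring
          have he2 : (L - a) + r = L - μ := by rw [hmudef]; ring
          rw [he1, he2] at hks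
          exact hks
        have hmain : p * (L * (L - μ)) ≤ ν / (2:ℝ) ^ ((m:ℝ)) := by
          have hstep : p * (L * (L - μ)) ≤ p * (r * a * (2:ℝ) ^ (L - a)) :=
            mul_le_mul_of_nonneg_left hks' h0y.le
          have heq2 : p * (r * a * (2:ℝ) ^ (L - a)) = ν / (2:ℝ) ^ ((m:ℝ)) := by
            rw [hppow, hnudef]
            rw [show (2:ℝ) ^ (-L) * (r * a * (2:ℝ) ^ (L - a))
                = r * a * ((2:ℝ) ^ (-L) * (2:ℝ) ^ (L - a)) by ring,
              ← Real.rpow_add (by norm_num)]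
            rw [show -L + (L - a) = -a by ring]
            rw [Real.rpow_neg (by norm_num), h2a]
            field_simp
          linarith [heq2 ▸ hstep]
        have hsplit2 : p * L^2 = p * (L * (L - μ)) + μ * (p * L) := by ring
        linarith
  -- sum up
  have hsum2 : ∑ y, D y * (Real.logb 2 (D y))^2
      ≤ μ * (∑ y, D y * Real.logb 2 (1 / D y)) + ν := by
    have h7 : ∑ y, D y * (Real.logb 2 (D y))^2
        ≤ ∑ y, (μ * (D y * Real.logb 2 (1 / D y)) + ν / (2:ℝ) ^ ((m:ℝ))) :=
      Finset.sum_le_sum (fun y _ => hatom y)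
    have h8 : ∑ y, (μ * (D y * Real.logb 2 (1 / D y)) + ν / (2:ℝ) ^ ((m:ℝ)))
        = μ * (∑ y, D y * Real.logb 2 (1 / D y))
          + (Fintype.card Ω : ℝ) * (ν / (2:ℝ) ^ ((m:ℝ))) := by
      rw [Finset.sum_add_distrib, ← Finset.mul_sum, Finset.sum_const,
        Finset.card_univ, nsmul_eq_mul]
    have h9 : (Fintype.card Ω : ℝ) * (ν / (2:ℝ) ^ ((m:ℝ))) = ν := by
      rw [hcount]
      field_simp
    rw [h8, h9] at h7
    exact h7
  set H := ∑ y, D y * Real.logb 2 (1 / D y) with hHdef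
  clear_value H
  have hH2 : (0:ℝ) < H^2 := by nlinarith
  rw [div_le_iff₀ hH2]
  have hfinal : μ * H + ν ≤ a * H^2 := by
    rw [hmudef]
    nlinarith [mul_nonneg (by linarith : (0:ℝ) ≤ H - 1) (by nlinarith : (0:ℝ) ≤ a * H + r)]
  linarith
end
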